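/- Every element of Ǧ(A) is invertible under composition: for g ∈ A((x)) with g = Σ g_k x^{k+1}, g_0 a unit, and g_k nilpotent for k < 0, there exists h ∈ Ǧ(A) with g∘h = h∘g = x. Hence Ǧ(A) is a group under composition. -/

import Mathlib

namespace Tate

/-- The set `Ǧ(A)` of invertible nil-Laurent series: Laurent series
`g = Σ_k g_k x^(k+1)` with `g_0` (the coefficient of `x^1`) a unit of `A` and `g_k`
(the coefficient of `x^(k+1)`, `k < 0`) nilpotent for all `k < 0`. -/
def Gcheck (A : Type*) [CommRing A] : Set (LaurentSeries A) :=
  {g | IsUnit (g.coeff 1) ∧ ∀ n : ℤ, n ≤ 0 → IsNilpotent (g.coeff n)}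

/-- Integer powers of a Laurent series, using the inverse in the Laurent series ring
(`Ring.inverse`, which is the genuine inverse for a unit) for negative exponents. -/
noncomputable def lzpow {A : Type*} [CommRing A] (g : LaurentSeries A) (k : ℤ) :
    LaurentSeries A :=
  if 0 ≤ k then g ^ k.toNat else (Ring.inverse g) ^ (-k).toNat

/-- The coefficient of `x^d` in the formal composite `f ∘ g = Σ_m f_m g^m`
(writing `f = Σ_m f_m x^m`), computed coefficientwise; for `g ∈ Ǧ(A)` only finitely
many terms contribute to each coefficient, by nilpotence. -/
noncomputable def compCoeff {A : Type*} [CommRing A] (f g : LaurentSeries A) (d : ℤ) : A :=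
  ∑ᶠ k : ℤ, f.coeff k * (lzpow g k).coeff d

/-!
A series `h` can be substituted as soon as its powers are uniformly bounded below: `h ^ n`
vanishes below `n - C` and `h⁻¹` below `-D` (`IsAdmissible`). Every element of `Ǧ(A)` is of
this form, being a series `P` of order `1` with unit leading coefficient plus a series `N`
whose coefficients generate a nilpotent ideal `I`, so that `N ^ M = 0`. For admissible `h`,
`f ↦ f ∘ h` is multiplicative, which gives `(f ∘ g) ∘ h = f ∘ (g ∘ h)`.

A right inverse of `g = P + N` is found in two steps. The iteration `q ↦ q - v (P ∘ q - x)`,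
with `v = P₁⁻¹`, fixes one more coefficient at each step and converges to `q` with
`P ∘ q = x`; then `g ∘ q = x + m` with the coefficients of `m` in `I`. The iteration
`μ ↦ -(m ∘ (x + μ))` gains a factor of `I` at each step, hence is stationary after `M` steps,
at a solution of `(x + m) ∘ (x + μ) = x`. So `h = q ∘ (x + μ)` is a right inverse of `g`, and
`h ≡ q` modulo `I` puts it in `Ǧ(A)`. Finally a right inverse `k` of `h` is `g`, as
`g = g ∘ (h ∘ k) = (g ∘ h) ∘ k = k`.
-/

section

open HahnSeries

theorem ring_inverse_eq_of_mul_eq_one {M : Type*} [CommMonoidWithZero M] {a b : M}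
    (h : a * b = 1) : Ring.inverse a = b :=
  Ring.inverse_unit (Units.mkOfMulEqOne a b h)

theorem sum_eq_sum_of_support_subset {ι M : Type*} [AddCommMonoid M] (f : ι → M)
    {s t : Finset ι} (hs : Function.support f ⊆ s) (ht : Function.support f ⊆ t) :
    ∑ i ∈ s, f i = ∑ i ∈ t, f i :=
  (finsum_eq_sum_of_support_subset f hs).symm.trans (finsum_eq_sum_of_support_subset f ht)

variable {A : Type*} [CommRing A]

section VanishesBelow

def VanishesBelow (c : ℤ) (z : LaurentSeries A) : Prop := ∀ d < c, z.coeff d = 0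

theorem vanishesBelow_iff_le_orderTop {c : ℤ} {z : LaurentSeries A} :
    VanishesBelow c z ↔ (c : WithTop ℤ) ≤ z.orderTop := by
  rw [le_orderTop_iff_forall]
  exact forall_congr' fun d => by rw [WithTop.coe_lt_coe]

theorem exists_vanishesBelow (z : LaurentSeries A) : ∃ b ≤ 0, VanishesBelow b z :=
  ⟨min z.order 0, min_le_right _ _, fun _ hd => coeff_eq_zero_of_lt_order (by omega)⟩

theorem vanishesBelow_zero (c : ℤ) : VanishesBelow c (0 : LaurentSeries A) := fun _ _ => rfl

theorem vanishesBelow_single (a : ℤ) (r : A) : VanishesBelow a (single a r) :=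
  fun _ hd => coeff_single_of_ne hd.ne

theorem vanishesBelow_one : VanishesBelow 0 (1 : LaurentSeries A) :=
  vanishesBelow_single 0 1

namespace VanishesBelow

variable {a b c : ℤ} {z w : LaurentSeries A}

theorem mono (h : VanishesBelow c z) (hle : b ≤ c) : VanishesBelow b z :=
  fun d hd => h d (hd.trans_le hle)

theorem add (hz : VanishesBelow c z) (hw : VanishesBelow c w) : VanishesBelow c (z + w) :=
  fun d hd => by rw [coeff_add, hz d hd, hw d hd, add_zero]

theorem neg (hz : VanishesBelow c z) : VanishesBelow c (-z) :=
  fun d hd => by rw [coeff_neg, hz d hd, neg_zero]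

theorem smul (r : A) (hz : VanishesBelow c z) : VanishesBelow c (r • z) :=
  fun d hd => by rw [coeff_smul, hz d hd, smul_zero]

theorem mul (hz : VanishesBelow a z) (hw : VanishesBelow b w) : VanishesBelow (a + b) (z * w) := by
  rw [vanishesBelow_iff_le_orderTop] at *
  exact (WithTop.coe_add a b ▸ add_le_add hz hw).trans orderTop_add_le_mul

theorem pow (hz : VanishesBelow c z) (n : ℕ) : VanishesBelow (n * c) (z ^ n) := by
  induction n with
  | zero => simpa using vanishesBelow_one
  | succ n ih => simpa [pow_succ, add_mul] using ih.mul hz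

theorem sum {ι : Type*} {s : Finset ι} {F : ι → LaurentSeries A}
    (h : ∀ i ∈ s, VanishesBelow c (F i)) : VanishesBelow c (∑ i ∈ s, F i) :=
  fun d hd => by rw [coeff_sum]; exact Finset.sum_eq_zero fun i hi => h i hi d hd

end VanishesBelow

theorem coeff_mul_eq_sum_Icc {z w : LaurentSeries A} {lo hi : ℤ} (d : ℤ)
    (hz : VanishesBelow lo z) (hw : VanishesBelow (d - hi) w) :
    (z * w).coeff d = ∑ i ∈ Finset.Icc lo hi, z.coeff i * w.coeff (d - i) := by
  rw [coeff_mul]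
  refine Finset.sum_bij_ne_zero (fun ij _ _ => ij.1) (fun ij hij _ => ?_)
    (fun ij hij _ ij' hij' _ h => ?_) (fun i _ hne => ?_) (fun ij hij _ => ?_)
  · obtain ⟨hzi, hwj, hsum⟩ := Finset.mem_antidiagonal.1 hij
    exact Finset.mem_Icc.2 ⟨not_lt.1 fun h => hzi (hz _ h),
      not_lt.1 fun h => hwj (hw _ (by omega))⟩
  · have := (Finset.mem_antidiagonal.1 hij).2.2
    have := (Finset.mem_antidiagonal.1 hij').2.2
    exact Prod.ext h (by omega)
  · refine ⟨(i, d - i), Finset.mem_antidiagonal.2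
      ⟨left_ne_zero_of_mul hne, right_ne_zero_of_mul hne, add_sub_cancel _ _⟩, ?_, rfl⟩
    simpa using hne
  · rw [← (Finset.mem_antidiagonal.1 hij).2.2, add_sub_cancel_left]

theorem exists_limit_of_vanishesBelow_sub {s : ℕ → LaurentSeries A} {b : ℤ}
    (hb : ∀ j, VanishesBelow b (s j)) (hs : ∀ j : ℕ, VanishesBelow j (s (j + 1) - s j)) :
    ∃ L, VanishesBelow b L ∧ ∀ j : ℕ, VanishesBelow j (L - s j) := by
  have hstab : ∀ d : ℤ, ∀ j ≥ (d + 1).toNat, (s j).coeff d = (s (d + 1).toNat).coeff d := by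
    intro d j hj
    induction j, hj using Nat.le_induction with
    | base => rfl
    | succ j hj ih => rw [← ih, ← sub_eq_zero, ← coeff_sub, hs j d (by omega)]
  have hL : BddBelow (Function.support fun d => (s (d + 1).toNat).coeff d) :=
    ⟨b, fun d hd => not_lt.1 fun hlt => hd (hb (d + 1).toNat d hlt)⟩
  refine ⟨ofSuppBddBelow _ hL, fun d hd => hb _ d hd, fun j d hd => ?_⟩
  rw [coeff_sub, coeff_ofSuppBddBelow, hstab d j (by omega), sub_self]

end VanishesBelow

section CoeffIdeal

def coeffIdeal (J : Ideal A) : Ideal (LaurentSeries A) where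
  carrier := {z | ∀ d, z.coeff d ∈ J}
  add_mem' hz hw d := by rw [coeff_add]; exact J.add_mem (hz d) (hw d)
  zero_mem' _ := J.zero_mem
  smul_mem' c z hz d := by
    rw [smul_eq_mul, coeff_mul]
    exact J.sum_mem fun ij _ => J.mul_mem_left _ (hz ij.2)

variable {I J : Ideal A} {z w : LaurentSeries A}

theorem mul_mem_coeffIdeal_mul (hz : z ∈ coeffIdeal I) (hw : w ∈ coeffIdeal J) :
    z * w ∈ coeffIdeal (I * J) := fun d => by
  rw [coeff_mul]
  exact Ideal.sum_mem _ fun ij _ => Ideal.mul_mem_mul (hz ij.1) (hw ij.2)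

theorem pow_mem_coeffIdeal_pow (hz : z ∈ coeffIdeal J) (n : ℕ) : z ^ n ∈ coeffIdeal (J ^ n) := by
  induction n with
  | zero => rw [pow_zero, Ideal.one_eq_top]; exact fun _ => Submodule.mem_top
  | succ n ih => rw [pow_succ, pow_succ]; exact mul_mem_coeffIdeal_mul ih hz

theorem coeffIdeal_bot : coeffIdeal (⊥ : Ideal A) = ⊥ :=
  eq_bot_iff.2 fun z hz => Ideal.mem_bot.2 (by ext d; exact Ideal.mem_bot.1 (hz d))

theorem pow_eq_zero_of_mem_coeffIdeal {M : ℕ} (hJ : J ^ M = ⊥) (hz : z ∈ coeffIdeal J) :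
    z ^ M = 0 := by
  simpa [hJ, coeffIdeal_bot] using pow_mem_coeffIdeal_pow hz M

end CoeffIdeal

theorem isUnit_and_vanishesBelow_inverse {h : LaurentSeries A} {c : ℤ} (hc : VanishesBelow c h)
    (hu : IsUnit (h.coeff c)) : IsUnit h ∧ VanishesBelow (-c) (Ring.inverse h) := by
  rcases subsingleton_or_nontrivial A with _ | _
  · exact ⟨isUnit_of_subsingleton h, fun _ _ => Subsingleton.elim _ _⟩
  have hne : h ≠ 0 := fun h0 => hu.ne_zero (by rw [h0, coeff_zero])
  have hord : h.order = c :=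
    le_antisymm (order_le_of_coeff_ne_zero hu.ne_zero) ((le_order_iff_forall hne).2 hc)
  have hunit : IsUnit h := isUnit_of_isUnit_leadingCoeff_AddUnitOrder
    (by rwa [leadingCoeff_eq, hord]) (AddGroup.isAddUnit _)
  refine ⟨hunit, fun d hd => coeff_eq_zero_of_lt_order ?_⟩
  have hmul := order_mul_of_ne_zero (x := h) (y := Ring.inverse h) <| by
    rw [leadingCoeff_eq (x := h), hord, Ne, hu.mul_right_eq_zero, leadingCoeff_eq_zero]
    rw [Ring.inverse_of_isUnit hunit]
    exact (hunit.unit⁻¹).ne_zero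
  rw [Ring.mul_inverse_cancel _ hunit, order_one, hord] at hmul
  omega

section ZPow

variable {h : LaurentSeries A}

theorem lzpow_of_nonneg {k : ℤ} (hk : 0 ≤ k) : lzpow h k = h ^ k.toNat := if_pos hk

theorem lzpow_of_neg {k : ℤ} (hk : k < 0) : lzpow h k = Ring.inverse h ^ (-k).toNat :=
  if_neg hk.not_ge

theorem lzpow_natCast (n : ℕ) : lzpow h n = h ^ n := by simp [lzpow]

theorem lzpow_one : lzpow h 1 = h := by simpa using lzpow_natCast (h := h) 1

theorem lzpow_eq_zpow_unit (hh : IsUnit h) (k : ℤ) : lzpow h k = ↑(hh.unit ^ k) := by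
  rcases le_or_gt 0 k with hk | hk
  · lift k to ℕ using hk
    simp [lzpow_natCast]
  · obtain ⟨n, rfl⟩ : ∃ n : ℕ, k = -n := ⟨(-k).toNat, by omega⟩
    simp [lzpow_of_neg hk, Ring.inverse_of_isUnit hh]

theorem lzpow_add (hh : IsUnit h) (a b : ℤ) : lzpow h (a + b) = lzpow h a * lzpow h b := by
  simp [lzpow_eq_zpow_unit hh, zpow_add]

theorem lzpow_single_one (k : ℤ) : lzpow (single 1 1 : LaurentSeries A) k = single k 1 := by
  rcases le_or_gt 0 k with hk | hk
  · simp [lzpow_of_nonneg hk, single_pow, hk]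
  · have hinv : Ring.inverse (single 1 1 : LaurentSeries A) = single (-1) 1 :=
      ring_inverse_eq_of_mul_eq_one (by simp [single_mul_single])
    simp only [lzpow_of_neg hk, hinv, single_pow, one_pow]
    rw [nsmul_eq_mul, Int.toNat_of_nonneg (by omega), mul_neg_one, neg_neg]

theorem lzpow_sub_lzpow_mem {U V : LaurentSeries A} (hU : IsUnit U) (hV : IsUnit V)
    {𝔍 : Ideal (LaurentSeries A)} (hUV : U - V ∈ 𝔍) (k : ℤ) : lzpow U k - lzpow V k ∈ 𝔍 := by
  rw [← Ideal.Quotient.eq] at hUV ⊢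
  have : Units.map (Ideal.Quotient.mk 𝔍).toMonoidHom hU.unit =
      Units.map (Ideal.Quotient.mk 𝔍).toMonoidHom hV.unit := Units.ext (by simpa using hUV)
  rw [lzpow_eq_zpow_unit hU, lzpow_eq_zpow_unit hV]
  have hmap (u : (LaurentSeries A)ˣ) : Ideal.Quotient.mk 𝔍 ↑(u ^ k) =
      ↑(Units.map (Ideal.Quotient.mk 𝔍).toMonoidHom u ^ k) := by
    rw [← map_zpow]; rfl
  rw [hmap, hmap, this]

end ZPow

/-- These bounds make `compCoeff f h d` a finite sum (only `k ≤ d + C` contribute) and bound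
`comp f h` below. -/
structure IsAdmissible (h : LaurentSeries A) (C D : ℤ) : Prop where
  isUnit : IsUnit h
  nonneg : 0 ≤ D
  vanishesBelow_pow (n : ℕ) : VanishesBelow (n - C) (h ^ n)
  vanishesBelow_inverse : VanishesBelow (-D) (Ring.inverse h)

namespace IsAdmissible

variable {h : LaurentSeries A} {C D : ℤ}

theorem coeff_lzpow_eq_zero (hA : IsAdmissible h C D) {k d : ℤ} (hk : 0 ≤ k) (hd : d + C < k) :
    (lzpow h k).coeff d = 0 := by
  rw [lzpow_of_nonneg hk]
  exact hA.vanishesBelow_pow _ d (by omega)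

theorem vanishesBelow_lzpow (hA : IsAdmissible h C D) {b k : ℤ} (hk : b ≤ k) :
    VanishesBelow (min (-C) (b * D)) (lzpow h k) := by
  rcases le_or_gt 0 k with h0 | h0
  · rw [lzpow_of_nonneg h0]
    exact (hA.vanishesBelow_pow _).mono (by omega)
  · rw [lzpow_of_neg h0]
    refine (hA.vanishesBelow_inverse.pow _).mono ?_
    calc min (-C) (b * D) ≤ k * D :=
          (min_le_right _ _).trans (mul_le_mul_of_nonneg_right hk hA.nonneg)
      _ = ((-k).toNat : ℤ) * -D := by rw [Int.toNat_of_nonneg (by omega)]; ring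

end IsAdmissible

section AddNilpotent

variable {P N : LaurentSeries A} {e : ℤ} {M : ℕ}

theorem vanishesBelow_add_pow (hP : VanishesBelow 1 P) (he : e ≤ 0) (hN : VanishesBelow e N)
    (hNM : N ^ M = 0) (k : ℕ) : VanishesBelow (k - M * (1 - e)) ((P + N) ^ k) := by
  rw [add_pow]
  refine VanishesBelow.sum fun j hj => ?_
  rcases le_or_gt M (k - j) with hMk | hMk
  · rw [pow_eq_zero_of_le hMk hNM, mul_zero, zero_mul]
    exact vanishesBelow_zero _
  · have hjk : j ≤ k := Nat.lt_succ_iff.1 (Finset.mem_range.1 hj)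
    refine (((hP.pow j).mul (hN.pow (k - j))).mul (vanishesBelow_single 0 _)).mono ?_
    have hkj : (k : ℤ) - j ≤ M := by omega
    push_cast [hjk]
    nlinarith [mul_le_mul_of_nonneg_right hkj (by omega : (0 : ℤ) ≤ 1 - e)]

theorem ring_inverse_add_of_pow_eq_zero (hP : IsUnit P) (hNM : N ^ M = 0) :
    Ring.inverse (P + N) =
      Ring.inverse P * ∑ t ∈ Finset.range M, (-(N * Ring.inverse P)) ^ t := by
  refine ring_inverse_eq_of_mul_eq_one ?_
  have hgeom := mul_neg_geom_sum (-(N * Ring.inverse P)) M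
  rw [neg_pow, mul_pow, hNM, zero_mul, mul_zero, sub_zero, sub_neg_eq_add] at hgeom
  calc (P + N) * (Ring.inverse P * ∑ t ∈ Finset.range M, (-(N * Ring.inverse P)) ^ t)
      = (P * Ring.inverse P + N * Ring.inverse P) *
          ∑ t ∈ Finset.range M, (-(N * Ring.inverse P)) ^ t := by ring
    _ = 1 := by rw [Ring.mul_inverse_cancel _ hP, hgeom]

theorem isAdmissible_add_of_pow_eq_zero (hP : VanishesBelow 1 P) (hPu : IsUnit (P.coeff 1))
    (he : e ≤ 0) (hN : VanishesBelow e N) (hNM : N ^ M = 0) :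
    IsAdmissible (P + N) (M * (1 - e)) (1 + M * (1 - e)) := by
  obtain ⟨hPunit, hPinv⟩ := isUnit_and_vanishesBelow_inverse hP hPu
  have hν : VanishesBelow (e - 1) (-(N * Ring.inverse P)) := (hN.mul hPinv).neg
  refine ⟨IsNilpotent.isUnit_add_left_of_commute ⟨M, hNM⟩ hPunit (.all _ _),
    by nlinarith, vanishesBelow_add_pow hP he hN hNM, ?_⟩
  rw [ring_inverse_add_of_pow_eq_zero hPunit hNM]
  refine (hPinv.mul (VanishesBelow.sum (c := M * (e - 1)) fun t ht => (hν.pow t).mono ?_)).mono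
    (by linarith)
  have ht : (t : ℤ) ≤ M := by exact_mod_cast (Finset.mem_range.1 ht).le
  nlinarith

end AddNilpotent

theorem exists_isAdmissible_of_sub_mem_coeffIdeal {I : Ideal A} {M : ℕ} {h q : LaurentSeries A}
    (hI : I ^ M = ⊥) (hq : VanishesBelow 1 q) (hqu : IsUnit (q.coeff 1))
    (hhq : h - q ∈ coeffIdeal I) : ∃ C D, IsAdmissible h C D := by
  obtain ⟨e, he, hhqe⟩ := exists_vanishesBelow (h - q)
  have := isAdmissible_add_of_pow_eq_zero hq hqu he hhqe (pow_eq_zero_of_mem_coeffIdeal hI hhq)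
  rw [add_sub_cancel] at this
  exact ⟨_, _, this⟩

theorem IsAdmissible.of_vanishesBelow_one {P : LaurentSeries A} (hP : VanishesBelow 1 P)
    (hPu : IsUnit (P.coeff 1)) : IsAdmissible P 0 1 := by
  obtain ⟨hPunit, hPinv⟩ := isUnit_and_vanishesBelow_inverse hP hPu
  exact ⟨hPunit, zero_le_one, fun n => by simpa using hP.pow n, hPinv⟩

theorem isAdmissible_single_one : IsAdmissible (single 1 1 : LaurentSeries A) 0 1 :=
  .of_vanishesBelow_one (vanishesBelow_single 1 1) (by simp)

section Comp

open Classical in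
/-- The composite as a Laurent series; the junk value `0` (coefficients not bounded below) never
occurs for admissible `h`. -/
noncomputable def comp (f h : LaurentSeries A) : LaurentSeries A :=
  if H : BddBelow (Function.support (compCoeff f h)) then ofSuppBddBelow _ H else 0

namespace IsAdmissible

variable {f h : LaurentSeries A} {b C D : ℤ} (hA : IsAdmissible h C D)
include hA

theorem compCoeff_eq_sum (hf : VanishesBelow b f) {d T : ℤ} (hT : 0 ≤ T) (hdT : d + C ≤ T) :
    compCoeff f h d = ∑ k ∈ Finset.Icc b T, f.coeff k * (lzpow h k).coeff d := by
  refine finsum_eq_sum_of_support_subset _ fun k hk => ?_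
  rw [Finset.coe_Icc, Set.mem_Icc]
  constructor
  · by_contra hkb
    exact hk (by simp only [hf k (by omega), zero_mul])
  · by_contra hkT
    exact hk (by
      simp only [hA.coeff_lzpow_eq_zero (k := k) (d := d) (by omega) (by omega), mul_zero])

theorem compCoeff_eq_zero (hf : VanishesBelow b f) {d : ℤ} (hd : d < min (-C) (b * D)) :
    compCoeff f h d = 0 := by
  rw [hA.compCoeff_eq_sum hf (le_max_right (d + C) 0) (le_max_left _ _)]
  exact Finset.sum_eq_zero fun k hk => by
    rw [hA.vanishesBelow_lzpow (Finset.mem_Icc.1 hk).1 d hd, mul_zero]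

theorem coeff_comp (f : LaurentSeries A) (d : ℤ) : (comp f h).coeff d = compCoeff f h d := by
  obtain ⟨b, -, hf⟩ := exists_vanishesBelow f
  have H : BddBelow (Function.support (compCoeff f h)) :=
    ⟨min (-C) (b * D), fun d hd => not_lt.1 fun hlt => hd (hA.compCoeff_eq_zero hf hlt)⟩
  simp [comp, H]

theorem compCoeff_add_left (f₁ f₂ : LaurentSeries A) (d : ℤ) :
    compCoeff (f₁ + f₂) h d = compCoeff f₁ h d + compCoeff f₂ h d := by
  obtain ⟨b₁, -, hf₁⟩ := exists_vanishesBelow f₁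
  obtain ⟨b₂, -, hf₂⟩ := exists_vanishesBelow f₂
  have hf₁' := hf₁.mono (min_le_left b₁ b₂)
  have hf₂' := hf₂.mono (min_le_right b₁ b₂)
  have hT := le_max_right (d + C) 0
  have hdT := le_max_left (d + C) 0
  rw [hA.compCoeff_eq_sum hf₁' hT hdT, hA.compCoeff_eq_sum hf₂' hT hdT,
    hA.compCoeff_eq_sum (hf₁'.add hf₂') hT hdT, ← Finset.sum_add_distrib]
  simp only [coeff_add, add_mul]

end IsAdmissible

theorem compCoeff_single_one_right (f : LaurentSeries A) (d : ℤ) :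
    compCoeff f (single 1 1) d = f.coeff d := by
  rw [compCoeff, finsum_eq_single _ d fun k hk => by simp [lzpow_single_one, Ne.symm hk]]
  simp [lzpow_single_one]

theorem compCoeff_single_one_left (h : LaurentSeries A) (d : ℤ) :
    compCoeff (single 1 1) h d = h.coeff d := by
  rw [compCoeff, finsum_eq_single _ 1 fun k hk => by simp [coeff_single_of_ne hk]]
  simp [lzpow_one]

theorem comp_single_one_right (f : LaurentSeries A) : comp f (single 1 1) = f := by
  ext d
  rw [isAdmissible_single_one.coeff_comp, compCoeff_single_one_right]

end Comp

namespace IsAdmissible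

variable {z w h : LaurentSeries A} {b C D : ℤ} (hA : IsAdmissible h C D)
include hA

theorem vanishesBelow_comp (hz : VanishesBelow b z) :
    VanishesBelow (min (-C) (b * D)) (comp z h) :=
  fun d hd => by rw [hA.coeff_comp]; exact hA.compCoeff_eq_zero hz hd

theorem compCoeff_mul_eq_sum (hz : VanishesBelow b z) (hw : VanishesBelow b w) {d T : ℤ}
    (hT : 0 ≤ T) (hdT : d + C ≤ T) :
    compCoeff (z * w) h d = ∑ i ∈ Finset.Icc b (T - b), ∑ j ∈ Finset.Icc b (T - b),
      z.coeff i * w.coeff j * (lzpow h (i + j)).coeff d := by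
  calc compCoeff (z * w) h d
      = ∑ m ∈ Finset.Icc (b + b) T, ∑ i ∈ Finset.Icc b (T - b),
          z.coeff i * w.coeff (m - i) * (lzpow h m).coeff d := by
        rw [hA.compCoeff_eq_sum (hz.mul hw) hT hdT]
        refine Finset.sum_congr rfl fun m hm => ?_
        have hm := Finset.mem_Icc.1 hm
        rw [coeff_mul_eq_sum_Icc (hi := T - b) m hz (hw.mono (by omega)), Finset.sum_mul]
    _ = ∑ i ∈ Finset.Icc b (T - b), ∑ m ∈ Finset.Icc (b + b) T,
          z.coeff i * w.coeff (m - i) * (lzpow h m).coeff d := Finset.sum_comm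
    _ = _ := by
        refine Finset.sum_congr rfl fun i hi => ?_
        have hi := Finset.mem_Icc.1 hi
        set G := fun m => z.coeff i * w.coeff (m - i) * (lzpow h m).coeff d
        have hG : ∀ m, G m ≠ 0 → i + b ≤ m ∧ m ≤ T := fun m hm => by
          refine ⟨not_lt.1 fun hlt => hm ?_, not_lt.1 fun hlt => hm ?_⟩
          · simp only [G, hw (m - i) (by omega), mul_zero, zero_mul]
          · simp only [G, hA.coeff_lzpow_eq_zero (k := m) (d := d) (by omega) (by omega),
              mul_zero]
        calc ∑ m ∈ Finset.Icc (b + b) T, G m = ∑ m ∈ Finset.Icc (i + b) (i + (T - b)), G m :=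
              sum_eq_sum_of_support_subset G
                (fun m hm => by have := hG m hm; simp only [Finset.coe_Icc, Set.mem_Icc]; omega)
                (fun m hm => by have := hG m hm; simp only [Finset.coe_Icc, Set.mem_Icc]; omega)
          _ = ∑ j ∈ Finset.Icc b (T - b), G (i + j) := by
              rw [← Finset.map_add_left_Icc, Finset.sum_map]; rfl
          _ = _ := by simp only [G, add_sub_cancel_left]

theorem coeff_comp_mul_comp_eq_sum (hz : VanishesBelow b z) (hw : VanishesBelow b w) {d T : ℤ}
    (hT : 0 ≤ T) (hdT : d - min (-C) (b * D) + C ≤ T) :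
    (comp z h * comp w h).coeff d = ∑ i ∈ Finset.Icc b T, ∑ j ∈ Finset.Icc b T,
      z.coeff i * w.coeff j * (lzpow h (i + j)).coeff d := by
  set lo := min (-C) (b * D)
  have hlo : ∀ i ∈ Finset.Icc b T, VanishesBelow lo (lzpow h i) :=
    fun i hi => hA.vanishesBelow_lzpow (Finset.mem_Icc.1 hi).1
  rw [coeff_mul_eq_sum_Icc (hi := d - lo) d (hA.vanishesBelow_comp hz)
    ((hA.vanishesBelow_comp hw).mono (by omega))]
  calc ∑ e ∈ Finset.Icc lo (d - lo), (comp z h).coeff e * (comp w h).coeff (d - e)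
      = ∑ e ∈ Finset.Icc lo (d - lo), ∑ i ∈ Finset.Icc b T, ∑ j ∈ Finset.Icc b T,
          z.coeff i * w.coeff j * ((lzpow h i).coeff e * (lzpow h j).coeff (d - e)) := by
        refine Finset.sum_congr rfl fun e he => ?_
        have he := Finset.mem_Icc.1 he
        rw [hA.coeff_comp, hA.coeff_comp, hA.compCoeff_eq_sum hz hT (by omega),
          hA.compCoeff_eq_sum hw hT (by omega), Finset.sum_mul_sum]
        exact Finset.sum_congr rfl fun i _ => Finset.sum_congr rfl fun j _ => by ring
    _ = ∑ i ∈ Finset.Icc b T, ∑ j ∈ Finset.Icc b T,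
          z.coeff i * w.coeff j * (lzpow h i * lzpow h j).coeff d := by
        rw [Finset.sum_comm]
        refine Finset.sum_congr rfl fun i hi => ?_
        rw [Finset.sum_comm]
        refine Finset.sum_congr rfl fun j hj => ?_
        rw [coeff_mul_eq_sum_Icc (hi := d - lo) d (hlo i hi) ((hlo j hj).mono (by omega)),
          Finset.mul_sum]
    _ = _ := by simp_rw [lzpow_add hA.isUnit]

theorem comp_mul (z w : LaurentSeries A) : comp (z * w) h = comp z h * comp w h := by
  obtain ⟨bz, hbz0, hz⟩ := exists_vanishesBelow z
  obtain ⟨bw, -, hw⟩ := exists_vanishesBelow w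
  set b := min bz bw
  have hbz : VanishesBelow b z := hz.mono (min_le_left _ _)
  have hbw : VanishesBelow b w := hw.mono (min_le_right _ _)
  ext d
  set T := max (d - min (-C) (b * D) + C) 0
  have hT : d - min (-C) (b * D) + C ≤ T := le_max_left _ _
  have hb : b ≤ 0 := min_le_of_left_le hbz0
  have hbD : b * D ≤ 0 := mul_nonpos_of_nonpos_of_nonneg hb hA.nonneg
  rw [hA.coeff_comp, hA.compCoeff_mul_eq_sum (T := T) hbz hbw (le_max_right _ _) (by omega),
    hA.coeff_comp_mul_comp_eq_sum (T := T - b) hbz hbw (by omega) (by omega)]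

theorem comp_one : comp 1 h = 1 := by
  ext d
  rw [hA.coeff_comp, compCoeff, finsum_eq_single _ 0 fun k hk => by simp [coeff_one, hk]]
  simp [lzpow, coeff_one]

noncomputable def compMonoidHom : LaurentSeries A →* LaurentSeries A where
  toFun f := comp f h
  map_one' := hA.comp_one
  map_mul' := hA.comp_mul

theorem comp_lzpow {g : LaurentSeries A} (hg : IsUnit g) (k : ℤ) :
    comp (lzpow g k) h = lzpow (comp g h) k := by
  have hgh : IsUnit (comp g h) := hg.map hA.compMonoidHom
  rw [lzpow_eq_zpow_unit hg, lzpow_eq_zpow_unit hgh]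
  have : Units.map hA.compMonoidHom hg.unit = hgh.unit := Units.ext rfl
  rw [← this, ← map_zpow]
  rfl

end IsAdmissible

theorem compCoeff_comp_assoc {f g h : LaurentSeries A} {Cg Dg Ch Dh C D : ℤ}
    (hg : IsAdmissible g Cg Dg) (hh : IsAdmissible h Ch Dh) (hgh : IsAdmissible (comp g h) C D)
    (d : ℤ) : compCoeff (comp f g) h d = compCoeff f (comp g h) d := by
  obtain ⟨b, -, hf⟩ := exists_vanishesBelow f
  set Tm := max (d + Ch) 0
  set Tk := max (Tm + Cg) (max (d + C) 0)
  calc compCoeff (comp f g) h d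
      = ∑ m ∈ Finset.Icc (min (-Cg) (b * Dg)) Tm,
          (∑ k ∈ Finset.Icc b Tk, f.coeff k * (lzpow g k).coeff m) * (lzpow h m).coeff d := by
        rw [hh.compCoeff_eq_sum (hg.vanishesBelow_comp hf) (le_max_right _ _) (le_max_left _ _)]
        refine Finset.sum_congr rfl fun m hm => ?_
        rw [hg.coeff_comp, hg.compCoeff_eq_sum (T := Tk) hf (by omega) (by grind)]
    _ = ∑ k ∈ Finset.Icc b Tk, f.coeff k * ∑ m ∈ Finset.Icc (min (-Cg) (b * Dg)) Tm,
          (lzpow g k).coeff m * (lzpow h m).coeff d := by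
        simp_rw [Finset.sum_mul, Finset.mul_sum, mul_assoc]
        exact Finset.sum_comm
    _ = ∑ k ∈ Finset.Icc b Tk, f.coeff k * (lzpow (comp g h) k).coeff d := by
        refine Finset.sum_congr rfl fun k hk => ?_
        rw [← hh.comp_lzpow hg.isUnit, hh.coeff_comp, hh.compCoeff_eq_sum
          (hg.vanishesBelow_lzpow (Finset.mem_Icc.1 hk).1) (le_max_right _ _) (le_max_left _ _)]
    _ = compCoeff f (comp g h) d :=
        (hgh.compCoeff_eq_sum hf (by omega) (by omega)).symm

section PositiveOrder

variable {p q : LaurentSeries A} {v : A}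

theorem vanishesBelow_pow_sub_pow {x y : LaurentSeries A} {s : ℤ} (hx : VanishesBelow 1 x)
    (hy : VanishesBelow 1 y) (hxy : VanishesBelow s (x - y)) (n : ℕ) :
    VanishesBelow (n - 1 + s) (x ^ n - y ^ n) := by
  rw [← geom_sum₂_mul]
  refine VanishesBelow.mul (VanishesBelow.sum fun i hi => ?_) hxy
  have := Finset.mem_range.1 hi
  exact ((hx.pow i).mul (hy.pow (n - 1 - i))).mono (by push_cast [Nat.sub_sub]; omega)

theorem compCoeff_eq_mul_coeff_of_le_one (hp : VanishesBelow 1 p) (hq : VanishesBelow 1 q)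
    (hqu : IsUnit (q.coeff 1)) {d : ℤ} (hd : d ≤ 1) :
    compCoeff p q d = p.coeff 1 * q.coeff d := by
  rw [(IsAdmissible.of_vanishesBelow_one hq hqu).compCoeff_eq_sum hp zero_le_one (by omega),
    Finset.Icc_self, Finset.sum_singleton, lzpow_one]

theorem compCoeff_add_eq_of_vanishesBelow {δ : LaurentSeries A} {s d : ℤ}
    (hp : VanishesBelow 1 p) (hq : VanishesBelow 1 q) (hqu : IsUnit (q.coeff 1))
    (hδ : VanishesBelow s δ) (hs : 2 ≤ s) (hd : d ≤ s) :
    compCoeff p (q + δ) d = compCoeff p q d + p.coeff 1 * δ.coeff d := by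
  have hqδ : VanishesBelow 1 (q + δ) := hq.add (hδ.mono (by omega))
  have hqδu : IsUnit ((q + δ).coeff 1) := by rwa [coeff_add, hδ 1 (by omega), add_zero]
  have hT : 0 ≤ max d 1 := by omega
  rw [(IsAdmissible.of_vanishesBelow_one hqδ hqδu).compCoeff_eq_sum hp hT (by omega),
    (IsAdmissible.of_vanishesBelow_one hq hqu).compCoeff_eq_sum hp hT (by omega),
    ← sub_eq_iff_eq_add', ← Finset.sum_sub_distrib, Finset.sum_eq_single 1]
  · rw [lzpow_one, lzpow_one, coeff_add]
    ring
  · intro k hk hk1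
    have hk := Finset.mem_Icc.1 hk
    rw [← mul_sub, lzpow_of_nonneg (by omega), lzpow_of_nonneg (by omega), ← coeff_sub,
      vanishesBelow_pow_sub_pow hqδ hq (by simpa using hδ) _ d (by omega), mul_zero]
  · exact fun h1 => absurd (Finset.mem_Icc.2 ⟨le_rfl, le_max_right d 1⟩) h1

noncomputable def approxCompInv (p : LaurentSeries A) (v : A) : ℕ → LaurentSeries A
  | 0 => single 1 v
  | j + 1 => approxCompInv p v j - v • (comp p (approxCompInv p v j) - single 1 1)

theorem vanishesBelow_comp_sub_single {c : ℤ} (hq : VanishesBelow 1 q)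
    (hqu : IsUnit (q.coeff 1))
    (hpq : ∀ d < c, compCoeff p q d = (single 1 1 : LaurentSeries A).coeff d) :
    VanishesBelow c (comp p q - single 1 1) := fun d hd => by
  rw [coeff_sub, (IsAdmissible.of_vanishesBelow_one hq hqu).coeff_comp, hpq d hd, sub_self]

theorem approxCompInv_spec (hp : VanishesBelow 1 p) (hv : p.coeff 1 * v = 1) (j : ℕ) :
    VanishesBelow 1 (approxCompInv p v j) ∧ (approxCompInv p v j).coeff 1 = v ∧
      ∀ d < (j : ℤ) + 2,
        compCoeff p (approxCompInv p v j) d = (single 1 1 : LaurentSeries A).coeff d := by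
  have hvu : IsUnit v := IsUnit.of_mul_eq_one (p.coeff 1) (by rw [mul_comm, hv])
  induction j with
  | zero =>
    refine ⟨vanishesBelow_single 1 v, coeff_single_same 1 v, fun d hd => ?_⟩
    rw [approxCompInv, compCoeff_eq_mul_coeff_of_le_one hp (vanishesBelow_single 1 v)
      (by simpa using hvu) (by omega), coeff_single, coeff_single]
    split_ifs <;> simp [hv]
  | succ j ih =>
    obtain ⟨hq, hqv, hqd⟩ := ih
    have hqu : IsUnit ((approxCompInv p v j).coeff 1) := by rw [hqv]; exact hvu
    set E := comp p (approxCompInv p v j) - single 1 1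
    have hδ : VanishesBelow (j + 2) (-(v • E)) :=
      ((vanishesBelow_comp_sub_single hq hqu hqd).smul v).neg
    have hseq : approxCompInv p v (j + 1) = approxCompInv p v j + -(v • E) := sub_eq_add_neg _ _
    refine ⟨hseq ▸ hq.add (hδ.mono (by omega)), by rw [hseq, coeff_add, hqv, hδ 1 (by omega),
      add_zero], fun d hd => ?_⟩
    have hEd : E.coeff d =
        compCoeff p (approxCompInv p v j) d - (single 1 1 : LaurentSeries A).coeff d := by
      rw [coeff_sub, (IsAdmissible.of_vanishesBelow_one hq hqu).coeff_comp]
    rw [hseq, compCoeff_add_eq_of_vanishesBelow hp hq hqu hδ (by omega) (by omega), coeff_neg,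
      coeff_smul, smul_eq_mul]
    linear_combination (-E.coeff d) * hv - hEd

theorem exists_compCoeff_eq_single_of_vanishesBelow_one (hp : VanishesBelow 1 p)
    (hv : p.coeff 1 * v = 1) :
    ∃ q, VanishesBelow 1 q ∧ q.coeff 1 = v ∧
      ∀ d, compCoeff p q d = (single 1 1 : LaurentSeries A).coeff d := by
  have hvu : IsUnit v := IsUnit.of_mul_eq_one (p.coeff 1) (by rw [mul_comm, hv])
  have hspec := approxCompInv_spec hp hv
  obtain ⟨q, hq, hlim⟩ := exists_limit_of_vanishesBelow_sub (fun j => (hspec j).1) fun j => by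
    obtain ⟨hs, hsv, hsd⟩ := hspec j
    have hsu : IsUnit ((approxCompInv p v j).coeff 1) := by rw [hsv]; exact hvu
    rw [approxCompInv, sub_sub_cancel_left]
    exact (((vanishesBelow_comp_sub_single hs hsu hsd).smul v).neg).mono (by omega)
  have hq_eq (j : ℕ) : q = approxCompInv p v j + (q - approxCompInv p v j) := by ring
  refine ⟨q, hq, ?_, fun d => ?_⟩
  · rw [hq_eq 2, coeff_add, (hspec 2).2.1, hlim 2 1 (by omega), add_zero]
  · obtain ⟨hs, hsv, hsd⟩ := hspec (d.toNat + 2)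
    rw [hq_eq (d.toNat + 2), compCoeff_add_eq_of_vanishesBelow hp hs (by rw [hsv]; exact hvu)
      (hlim _) (by omega) (by omega), hsd d (by omega), hlim _ d (by omega), mul_zero, add_zero]

end PositiveOrder

section Nilpotent

variable {I J : Ideal A} {M : ℕ}

theorem exists_isAdmissible_single_one_add (hI : I ^ M = ⊥) {μ : LaurentSeries A}
    (hμ : μ ∈ coeffIdeal I) : ∃ C D, IsAdmissible (single 1 1 + μ) C D :=
  exists_isAdmissible_of_sub_mem_coeffIdeal hI (vanishesBelow_single 1 1) (by simp)
    (by rwa [add_sub_cancel_left])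

theorem IsAdmissible.comp_mem_coeffIdeal {f h : LaurentSeries A} {C D : ℤ}
    (hA : IsAdmissible h C D) (hf : f ∈ coeffIdeal J) : comp f h ∈ coeffIdeal J := fun d => by
  obtain ⟨b, -, hfb⟩ := exists_vanishesBelow f
  rw [hA.coeff_comp, hA.compCoeff_eq_sum hfb (le_max_right (d + C) 0) (le_max_left _ _)]
  exact J.sum_mem fun k _ => J.mul_mem_right _ (hf k)

theorem comp_sub_comp_mem_coeffIdeal_mul {f a b : LaurentSeries A} {Ca Da Cb Db : ℤ}
    (hf : f ∈ coeffIdeal I) (ha : IsAdmissible a Ca Da) (hb : IsAdmissible b Cb Db)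
    (hab : a - b ∈ coeffIdeal J) : comp f a - comp f b ∈ coeffIdeal (I * J) := fun d => by
  obtain ⟨e, -, hfe⟩ := exists_vanishesBelow f
  set T := max (max (d + Ca) (d + Cb)) 0
  rw [coeff_sub, ha.coeff_comp, hb.coeff_comp, ha.compCoeff_eq_sum hfe (T := T) (by omega)
    (by omega), hb.compCoeff_eq_sum hfe (T := T) (by omega) (by omega), ← Finset.sum_sub_distrib]
  refine Ideal.sum_mem _ fun k _ => ?_
  rw [← mul_sub, ← coeff_sub]
  exact Ideal.mul_mem_mul (hf k) (lzpow_sub_lzpow_mem ha.isUnit hb.isUnit hab k d)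

noncomputable def nilCorrection (m : LaurentSeries A) : ℕ → LaurentSeries A
  | 0 => 0
  | j + 1 => -comp m (single 1 1 + nilCorrection m j)

variable {m : LaurentSeries A}

theorem nilCorrection_mem (hI : I ^ M = ⊥) (hm : m ∈ coeffIdeal I) (j : ℕ) :
    nilCorrection m j ∈ coeffIdeal I := by
  induction j with
  | zero => exact zero_mem _
  | succ j ih =>
    obtain ⟨C, D, hA⟩ := exists_isAdmissible_single_one_add hI ih
    exact neg_mem (hA.comp_mem_coeffIdeal hm)

theorem nilCorrection_succ_sub_mem (hI : I ^ M = ⊥) (hm : m ∈ coeffIdeal I) (j : ℕ) :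
    nilCorrection m (j + 1) - nilCorrection m j ∈ coeffIdeal (I ^ (j + 1)) := by
  induction j with
  | zero => simpa [nilCorrection] using neg_mem (isAdmissible_single_one.comp_mem_coeffIdeal hm)
  | succ j ih =>
    obtain ⟨Ca, Da, ha⟩ := exists_isAdmissible_single_one_add hI (nilCorrection_mem hI hm j)
    obtain ⟨Cb, Db, hb⟩ := exists_isAdmissible_single_one_add hI (nilCorrection_mem hI hm (j + 1))
    rw [pow_succ', show nilCorrection m (j + 1 + 1) - nilCorrection m (j + 1) =
      comp m (single 1 1 + nilCorrection m j) - comp m (single 1 1 + nilCorrection m (j + 1))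
      from neg_sub_neg _ _]
    exact comp_sub_comp_mem_coeffIdeal_mul hm ha hb (by simpa using neg_mem ih)

theorem exists_compCoeff_single_one_add_eq_single (hI : I ^ M = ⊥) (hm : m ∈ coeffIdeal I) :
    ∃ μ ∈ coeffIdeal I, ∀ d, compCoeff (single 1 1 + m) (single 1 1 + μ) d =
      (single 1 1 : LaurentSeries A).coeff d := by
  have hfix : nilCorrection m (M + 1) = nilCorrection m M := by
    have h := nilCorrection_succ_sub_mem hI hm M
    rwa [pow_succ, hI, Ideal.bot_mul, coeffIdeal_bot, Ideal.mem_bot, sub_eq_zero] at h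
  obtain ⟨C, D, hA⟩ := exists_isAdmissible_single_one_add hI (nilCorrection_mem hI hm M)
  refine ⟨_, nilCorrection_mem hI hm M, fun d => ?_⟩
  rw [hA.compCoeff_add_left, compCoeff_single_one_left, ← hA.coeff_comp, ← neg_neg (comp m _),
    coeff_neg, ← nilCorrection, hfix, coeff_add]
  ring

end Nilpotent

section Gcheck

variable {I : Ideal A} {M : ℕ} {g h q : LaurentSeries A}

theorem mem_Gcheck_of_sub_mem_coeffIdeal (hI : I ^ M = ⊥) (hq : VanishesBelow 1 q)
    (hqu : IsUnit (q.coeff 1)) (hhq : h - q ∈ coeffIdeal I) : h ∈ Gcheck A := by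
  have hnil : ∀ d, IsNilpotent ((h - q).coeff d) := fun d =>
    ⟨M, by simpa [hI] using Ideal.pow_mem_pow (hhq d) M⟩
  have hcoeff : ∀ d, h.coeff d = q.coeff d + (h - q).coeff d := fun d => by
    rw [coeff_sub]; ring
  refine ⟨?_, fun d hd => ?_⟩
  · rw [hcoeff]
    exact (hnil 1).isUnit_add_left_of_commute hqu (.all _ _)
  · rw [hcoeff, hq d (by omega), zero_add]
    exact hnil d

theorem Gcheck.exists_truncLT_mem_coeffIdeal (hg : g ∈ Gcheck A) :
    ∃ (I : Ideal A) (M : ℕ), I ^ M = ⊥ ∧ truncLT 1 g ∈ coeffIdeal I := by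
  obtain ⟨b, -, hb⟩ := exists_vanishesBelow g
  set I := Ideal.span (g.coeff '' Set.Icc b 0)
  obtain ⟨M, hM⟩ := (Ideal.FG.isNilpotent_iff_le_nilradical
    (Submodule.fg_span ((Set.finite_Icc b 0).image _))).2
      (Ideal.span_le.2 (by rintro _ ⟨d, hd, rfl⟩; exact hg.2 d hd.2))
  refine ⟨I, M, hM, fun d => ?_⟩
  rw [HahnSeries.coeff_truncLT]
  split_ifs with hd1
  · by_cases hdb : d < b
    · rw [hb d hdb]; exact zero_mem _
    · exact Ideal.subset_span ⟨d, ⟨by omega, by omega⟩, rfl⟩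
  · exact zero_mem _

theorem vanishesBelow_sub_truncLT (g : LaurentSeries A) : VanishesBelow 1 (g - truncLT 1 g) :=
  fun d hd => by rw [coeff_sub, coeff_truncLT_of_lt hd, sub_self]

theorem coeff_sub_truncLT_one (g : LaurentSeries A) : (g - truncLT 1 g).coeff 1 = g.coeff 1 := by
  rw [coeff_sub, coeff_truncLT_of_le le_rfl, sub_zero]

theorem Gcheck.exists_isAdmissible (hg : g ∈ Gcheck A) : ∃ C D, IsAdmissible g C D := by
  obtain ⟨I, M, hI, hgI⟩ := Gcheck.exists_truncLT_mem_coeffIdeal hg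
  refine exists_isAdmissible_of_sub_mem_coeffIdeal hI (vanishesBelow_sub_truncLT g)
    (by rw [coeff_sub_truncLT_one]; exact hg.1) ?_
  rwa [sub_sub_cancel]

theorem Gcheck.exists_right_inv (hg : g ∈ Gcheck A) :
    ∃ h ∈ Gcheck A, ∀ d, compCoeff g h d = (single 1 1 : LaurentSeries A).coeff d := by
  obtain ⟨I, M, hI, hgI⟩ := Gcheck.exists_truncLT_mem_coeffIdeal hg
  obtain ⟨v, hv⟩ := hg.1.exists_right_inv
  obtain ⟨q, hq, hqv, hpq⟩ := exists_compCoeff_eq_single_of_vanishesBelow_one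
    (vanishesBelow_sub_truncLT g) (by rwa [coeff_sub_truncLT_one])
  have hqu : IsUnit (q.coeff 1) := hqv ▸ IsUnit.of_mul_eq_one (g.coeff 1) (by rwa [mul_comm])
  have hqA := IsAdmissible.of_vanishesBelow_one hq hqu
  have hm : comp g q - single 1 1 ∈ coeffIdeal I := fun d => by
    rw [coeff_sub, hqA.coeff_comp, ← sub_add_cancel g (truncLT 1 g), hqA.compCoeff_add_left,
      hpq, add_sub_cancel_left, ← hqA.coeff_comp]
    exact hqA.comp_mem_coeffIdeal hgI d
  obtain ⟨μ, hμ, hμd⟩ := exists_compCoeff_single_one_add_eq_single hI hm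
  have hμ' : single 1 1 + μ - single 1 1 ∈ coeffIdeal I := by rwa [add_sub_cancel_left]
  obtain ⟨Cr, Dr, hrA⟩ := exists_isAdmissible_single_one_add hI hμ
  have hhq : comp q (single 1 1 + μ) - q ∈ coeffIdeal I := by
    simpa [comp_single_one_right] using comp_sub_comp_mem_coeffIdeal_mul
      (fun _ => Submodule.mem_top) hrA isAdmissible_single_one hμ'
  obtain ⟨Ch, Dh, hhA⟩ := exists_isAdmissible_of_sub_mem_coeffIdeal hI hq hqu hhq
  refine ⟨_, mem_Gcheck_of_sub_mem_coeffIdeal hI hq hqu hhq, fun d => ?_⟩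
  rw [← compCoeff_comp_assoc hqA hrA hhA, ← sub_add_cancel (comp g q) (single 1 1), add_comm]
  exact hμd d

end Gcheck

end

/-- Every element of `Ǧ(A)` is invertible under composition: for `g ∈ Ǧ(A)` there is
`h ∈ Ǧ(A)` with `g ∘ h = h ∘ g = x`.  Hence `Ǧ(A)` is a group under composition. -/
theorem Gcheck_inv_exists (A : Type*) [CommRing A] (g : LaurentSeries A)
    (hg : g ∈ Gcheck A) :
    ∃ h ∈ Gcheck A,
      (∀ d : ℤ, compCoeff g h d = (HahnSeries.single (1 : ℤ) (1 : A)).coeff d) ∧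
      (∀ d : ℤ, compCoeff h g d = (HahnSeries.single (1 : ℤ) (1 : A)).coeff d) := by
  obtain ⟨h, hh, hgh⟩ := Gcheck.exists_right_inv hg
  obtain ⟨k, hk, hhk⟩ := Gcheck.exists_right_inv hh
  obtain ⟨Ch, Dh, hhA⟩ := Gcheck.exists_isAdmissible hh
  obtain ⟨Ck, Dk, hkA⟩ := Gcheck.exists_isAdmissible hk
  have hgh' : comp g h = HahnSeries.single 1 1 := by ext d; rw [hhA.coeff_comp, hgh]
  have hhk' : comp h k = HahnSeries.single 1 1 := by ext d; rw [hkA.coeff_comp, hhk]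
  have hkg : k = g := by
    ext d
    have := compCoeff_comp_assoc (f := g) hhA hkA (hhk' ▸ isAdmissible_single_one) d
    rwa [hgh', hhk', compCoeff_single_one_left, compCoeff_single_one_right] at this
  exact ⟨h, hh, hgh, hkg ▸ hhk⟩

end Tate
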